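/- arXiv:1904.11594 — 2 statements merged into one kernel-verified Lean document; each statement's English description precedes it below -/
import Mathlib

section
/- For the multivariate regression model Y = XB + ε with independent rows ε_{i·} ~ N_K(0, Ψ), Ψ positive definite with largest eigenvalue d, fix ε > 0 and define the test Φ_n = I(‖B̂ − B₀‖ > ε/2), where B̂ = (XᵀX)⁻¹XᵀY is the least-squares estimator and B₀ is a fixed reference parameter. Assume (A3): there exists c > 0 with liminf_{n→∞} λ₁((1/n)XᵀX) > c, where λ₁ denotes the smallest eigenvalue. Let B_ε = { B : ‖B − B₀‖ > ε }. Then (for all n sufficiently large that λ₁((1/n)XᵀX) > c) the type II error satisfies sup_{B ∈ B_ε} E_B(1 − Φ_n) ≤ exp(−n ε² c / (16 d)). -/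
open MeasureTheory Matrix Real

/-!
Write `Δ = B - B₀` and `M = (XᵀX)⁻¹Xᵀ`, so that `B̂ = MY` and `MX = 1`. On the acceptance region
`‖B̂ - B₀‖ ≤ ε/2` the linear statistic `T(Y) = ⟨Y - XB, -MᵀΔ⟩ = ‖Δ‖² - ⟨B̂ - B₀, Δ⟩` is at least
`‖Δ‖ε/2`, by Cauchy–Schwarz and `‖Δ‖ > ε`. Under `E_B`, `T` is a centred Gaussian with variance
at most `d ‖MᵀΔ‖² = d ⟨Δ, (XᵀX)⁻¹Δ⟩ ≤ d ‖Δ‖² / (nc)`, so the Chernoff bound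
`P(T ≥ t) ≤ exp(-t² / (2v))`, with the Gaussian moment generating function obtained by completing
the square, gives even `exp(-nε²c / (8d))`.
-/

noncomputable def normalDensity {K : ℕ} (Ψ : Matrix (Fin K) (Fin K) ℝ)
    (μ y : Fin K → ℝ) : ℝ :=
  (2 * π) ^ (-(K : ℝ) / 2) * Ψ.det ^ (-(1 : ℝ) / 2) *
    Real.exp (-(1 / 2) * ((y - μ) ⬝ᵥ (Ψ⁻¹ *ᵥ (y - μ))))

noncomputable def frobNorm {m n : Type*} [Fintype m] [Fintype n]
    (M : Matrix m n ℝ) : ℝ :=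
  Real.sqrt (∑ i, ∑ j, (M i j) ^ 2)

lemma dotProduct_self_nonneg {ι : Type*} [Fintype ι] (x : ι → ℝ) : 0 ≤ x ⬝ᵥ x :=
  Fintype.sum_nonneg fun i => mul_self_nonneg (x i)

section QuadraticForm

variable {ι : Type*} [Fintype ι] [DecidableEq ι] {A : Matrix ι ι ℝ}

namespace Matrix.IsHermitian

lemma dotProduct_mulVec_eq_sum_eigenvalues (hA : A.IsHermitian) (x : ι → ℝ) :
    x ⬝ᵥ A *ᵥ x =
      ∑ i, hA.eigenvalues i * ((star (hA.eigenvectorUnitary : Matrix ι ι ℝ) *ᵥ x) i) ^ 2 := by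
  set U : Matrix ι ι ℝ := (hA.eigenvectorUnitary : Matrix ι ι ℝ)
  have hA' : A = U * diagonal hA.eigenvalues * star U := by simpa using hA.spectral_theorem
  conv_lhs => rw [hA', ← mulVec_mulVec, ← mulVec_mulVec, dotProduct_mulVec, ← mulVec_transpose]
  simp only [dotProduct, mulVec_diagonal, star_eq_conjTranspose,
    conjTranspose_eq_transpose_of_trivial]
  exact Finset.sum_congr rfl fun i _ => by ring

lemma star_eigenvectorUnitary_mulVec_dotProduct_self (hA : A.IsHermitian) (x : ι → ℝ) :
    (star (hA.eigenvectorUnitary : Matrix ι ι ℝ) *ᵥ x) ⬝ᵥ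
      (star (hA.eigenvectorUnitary : Matrix ι ι ℝ) *ᵥ x) = x ⬝ᵥ x := by
  have hUt : (star (hA.eigenvectorUnitary : Matrix ι ι ℝ))ᵀ = hA.eigenvectorUnitary := by
    simp [star_eq_conjTranspose, conjTranspose_eq_transpose_of_trivial]
  rw [dotProduct_mulVec, ← mulVec_transpose, mulVec_mulVec, hUt,
    Unitary.mul_star_self_of_mem hA.eigenvectorUnitary.2, one_mulVec]

lemma dotProduct_mulVec_le (hA : A.IsHermitian) {d : ℝ} (hd : ∀ i, hA.eigenvalues i ≤ d)
    (x : ι → ℝ) : x ⬝ᵥ A *ᵥ x ≤ d * (x ⬝ᵥ x) := by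
  rw [hA.dotProduct_mulVec_eq_sum_eigenvalues,
    ← hA.star_eigenvectorUnitary_mulVec_dotProduct_self x, dotProduct, Finset.mul_sum]
  refine Finset.sum_le_sum fun i _ => ?_
  exact (mul_le_mul_of_nonneg_right (hd i) (sq_nonneg _)).trans_eq (by ring)

lemma le_dotProduct_mulVec (hA : A.IsHermitian) {c : ℝ} (hc : ∀ i, c ≤ hA.eigenvalues i)
    (x : ι → ℝ) : c * (x ⬝ᵥ x) ≤ x ⬝ᵥ A *ᵥ x := by
  rw [hA.dotProduct_mulVec_eq_sum_eigenvalues,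
    ← hA.star_eigenvectorUnitary_mulVec_dotProduct_self x, dotProduct, Finset.mul_sum]
  refine Finset.sum_le_sum fun i _ => ?_
  exact (mul_le_mul_of_nonneg_right (hc i) (sq_nonneg _)).trans_eq' (by ring)

end Matrix.IsHermitian

lemma isUnit_det_of_coercive {m : ℝ} (hm : 0 < m) (hA : ∀ x, m * (x ⬝ᵥ x) ≤ x ⬝ᵥ A *ᵥ x) :
    IsUnit A.det := by
  rw [← isUnit_iff_isUnit_det, ← mulVec_injective_iff_isUnit]
  intro x y hxy
  have h := hA (x - y)
  rw [mulVec_sub, hxy, sub_self, dotProduct_zero] at h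
  have hle : (x - y) ⬝ᵥ (x - y) ≤ 0 := nonpos_of_mul_nonpos_right h hm
  exact sub_eq_zero.1 (dotProduct_self_eq_zero.1 (hle.antisymm (dotProduct_self_nonneg _)))

lemma dotProduct_inv_mulVec_le_of_coercive {m : ℝ} (hm : 0 < m)
    (hA : ∀ x, m * (x ⬝ᵥ x) ≤ x ⬝ᵥ A *ᵥ x) (x : ι → ℝ) :
    x ⬝ᵥ A⁻¹ *ᵥ x ≤ m⁻¹ * (x ⬝ᵥ x) := by
  set y := A⁻¹ *ᵥ x
  have hy : A *ᵥ y = x := by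
    rw [mulVec_mulVec, mul_nonsing_inv A (isUnit_det_of_coercive hm hA), one_mulVec]
  have hcoer : m * (y ⬝ᵥ y) ≤ x ⬝ᵥ y := by rw [dotProduct_comm x, ← hy]; exact hA y
  -- expanding `0 ≤ ‖m y - x‖²` and using `hcoer` gives `m (x ⬝ y) ≤ x ⬝ x`
  have hsq : 0 ≤ (m • y - x) ⬝ᵥ (m • y - x) := dotProduct_self_nonneg _
  simp only [sub_dotProduct, dotProduct_sub, smul_dotProduct, dotProduct_smul, smul_eq_mul,
    dotProduct_comm y x] at hsq
  rw [le_inv_mul_iff₀ hm]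
  nlinarith

end QuadraticForm

section GaussianIntegral

variable {ι : Type*} [Fintype ι] [DecidableEq ι] {A : Matrix ι ι ℝ}

lemma map_mulVec_volume_of_mem_unitaryGroup {U : Matrix ι ι ℝ} (hU : U ∈ unitaryGroup ι ℝ) :
    Measure.map (U *ᵥ ·) volume = volume := by
  have hdet : |U.det| = 1 := by
    rw [← Real.norm_eq_abs]
    exact CStarRing.norm_of_mem_unitary (det_of_mem_unitary hU)
  have hdet0 : U.det ≠ 0 := fun h => by rw [h, abs_zero] at hdet; exact zero_ne_one hdet
  have h := map_matrix_volume_pi_eq_smul_volume_pi hdet0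
  rw [abs_inv, hdet, inv_one, ENNReal.ofReal_one, one_smul] at h
  exact h

lemma exp_neg_half_dotProduct_mulVec_eigenvectorUnitary (hA : A.IsHermitian) (v : ι → ℝ) :
    exp (-(1 / 2) * ((hA.eigenvectorUnitary *ᵥ v) ⬝ᵥ A *ᵥ (hA.eigenvectorUnitary *ᵥ v))) =
      ∏ i, exp (-(hA.eigenvalues i / 2) * v i ^ 2) := by
  rw [hA.dotProduct_mulVec_eq_sum_eigenvalues, mulVec_mulVec,
    Unitary.star_mul_self_of_mem hA.eigenvectorUnitary.2, one_mulVec, Finset.mul_sum, ← exp_sum]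
  congr 1
  exact Finset.sum_congr rfl fun i _ => by ring

lemma integrable_exp_neg_half_dotProduct_mulVec (hA : A.PosDef) :
    Integrable fun z : ι → ℝ => exp (-(1 / 2) * (z ⬝ᵥ A *ᵥ z)) := by
  rw [← map_mulVec_volume_of_mem_unitaryGroup hA.1.eigenvectorUnitary.2,
    integrable_map_measure (by fun_prop) (by fun_prop)]
  simp only [Function.comp_def, exp_neg_half_dotProduct_mulVec_eigenvectorUnitary]
  exact Integrable.fintype_prod (f := fun i t => exp (-(hA.1.eigenvalues i / 2) * t ^ 2))
    fun i => integrable_exp_neg_mul_sq (by linarith [hA.eigenvalues_pos i])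

lemma integral_exp_neg_half_dotProduct_mulVec (hA : A.PosDef) :
    ∫ z : ι → ℝ, exp (-(1 / 2) * (z ⬝ᵥ A *ᵥ z)) =
      (2 * π) ^ ((Fintype.card ι : ℝ) / 2) * A.det ^ (-(1 : ℝ) / 2) := by
  rw [← map_mulVec_volume_of_mem_unitaryGroup hA.1.eigenvectorUnitary.2,
    integral_map (by fun_prop) (by fun_prop)]
  simp only [exp_neg_half_dotProduct_mulVec_eigenvectorUnitary]
  rw [integral_fintype_prod_volume_eq_prod (fun i t => exp (-(hA.1.eigenvalues i / 2) * t ^ 2)),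
    hA.1.det_eq_prod_eigenvalues]
  have hfactor : ∀ i, √(π / (hA.1.eigenvalues i / 2)) =
      (2 * π) ^ ((1 : ℝ) / 2) * hA.1.eigenvalues i ^ (-(1 : ℝ) / 2) := fun i => by
    have hpos := hA.eigenvalues_pos i
    rw [sqrt_eq_rpow, show π / (hA.1.eigenvalues i / 2) = 2 * π / hA.1.eigenvalues i by
      field_simp, div_rpow (by positivity) hpos.le, div_eq_mul_inv, neg_div, rpow_neg hpos.le]
  simp only [integral_gaussian, RCLike.ofReal_real_eq_id, id, hfactor]
  rw [Finset.prod_mul_distrib, Finset.prod_const, Finset.card_univ, ← rpow_natCast,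
    ← rpow_mul (by positivity), Real.finsetProd_rpow _ _ fun i _ => (hA.eigenvalues_pos i).le]
  ring_nf

end GaussianIntegral

section NormalDensity

variable {K : ℕ} {Ψ : Matrix (Fin K) (Fin K) ℝ}

lemma normalDensity_nonneg (hΨ : Ψ.PosSemidef) (μ y : Fin K → ℝ) :
    0 ≤ normalDensity Ψ μ y := by
  have := hΨ.det_nonneg
  unfold normalDensity
  positivity

lemma integrable_normalDensity (hΨ : Ψ.PosDef) (μ : Fin K → ℝ) :
    Integrable (normalDensity Ψ μ) :=
  ((integrable_exp_neg_half_dotProduct_mulVec hΨ.inv).comp_sub_right μ).const_mul _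

lemma integral_normalDensity (hΨ : Ψ.PosDef) (μ : Fin K → ℝ) :
    ∫ y, normalDensity Ψ μ y = 1 := by
  have hdet := hΨ.det_pos
  simp only [normalDensity]
  rw [integral_const_mul,
    integral_sub_right_eq_self (fun z => exp (-(1 / 2) * (z ⬝ᵥ Ψ⁻¹ *ᵥ z))) μ,
    integral_exp_neg_half_dotProduct_mulVec hΨ.inv, Fintype.card_fin, det_nonsing_inv,
    Ring.inverse_eq_inv', inv_rpow hdet.le, ← rpow_neg hdet.le, mul_mul_mul_comm,
    ← rpow_add (by positivity), ← rpow_add hdet, neg_div, neg_add_cancel, add_neg_cancel,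
    rpow_zero, rpow_zero, one_mul]

lemma normalDensity_mul_exp_dotProduct (hΨ : Ψ.PosDef) (μ b y : Fin K → ℝ) :
    normalDensity Ψ μ y * exp ((y - μ) ⬝ᵥ b) =
      exp (1 / 2 * (b ⬝ᵥ Ψ *ᵥ b)) * normalDensity Ψ (μ + Ψ *ᵥ b) y := by
  have hinv : Ψ⁻¹ *ᵥ Ψ *ᵥ b = b := by
    rw [mulVec_mulVec, nonsing_inv_mul Ψ hΨ.det_pos.ne'.isUnit, one_mulVec]
  have hsymm : (Ψ⁻¹)ᵀ = Ψ⁻¹ := by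
    simpa [conjTranspose_eq_transpose_of_trivial] using hΨ.inv.1.eq
  have hsquare : (y - (μ + Ψ *ᵥ b)) ⬝ᵥ Ψ⁻¹ *ᵥ (y - (μ + Ψ *ᵥ b)) =
      (y - μ) ⬝ᵥ Ψ⁻¹ *ᵥ (y - μ) - 2 * ((y - μ) ⬝ᵥ b) + b ⬝ᵥ Ψ *ᵥ b := by
    rw [← sub_sub, mulVec_sub, sub_dotProduct, dotProduct_sub, dotProduct_sub, hinv,
      dotProduct_mulVec (Ψ *ᵥ b), ← mulVec_transpose, hsymm, hinv, dotProduct_comm (Ψ *ᵥ b),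
      dotProduct_comm b]
    ring
  unfold normalDensity
  rw [hsquare, mul_assoc, ← exp_add, mul_left_comm, ← exp_add]
  congr 2
  ring

lemma integrable_normalDensity_mul_exp_dotProduct (hΨ : Ψ.PosDef) (μ b : Fin K → ℝ) :
    Integrable fun y => normalDensity Ψ μ y * exp ((y - μ) ⬝ᵥ b) := by
  simp only [normalDensity_mul_exp_dotProduct hΨ]
  exact (integrable_normalDensity hΨ _).const_mul _

lemma integral_normalDensity_mul_exp_dotProduct (hΨ : Ψ.PosDef) (μ b : Fin K → ℝ) :
    ∫ y, normalDensity Ψ μ y * exp ((y - μ) ⬝ᵥ b) = exp (1 / 2 * (b ⬝ᵥ Ψ *ᵥ b)) := by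
  simp only [normalDensity_mul_exp_dotProduct hΨ]
  rw [integral_const_mul, integral_normalDensity hΨ, mul_one]

end NormalDensity

section Frobenius

variable {l m n : Type*} [Fintype l] [Fintype m] [Fintype n]

def frobInner (P Q : Matrix m n ℝ) : ℝ := ∑ i, ∑ j, P i j * Q i j

lemma frobInner_eq_trace (P Q : Matrix m n ℝ) : frobInner P Q = (Pᵀ * Q).trace := by
  simp only [frobInner, trace, diag, mul_apply, transpose_apply]
  exact Finset.sum_comm

lemma frobNorm_nonneg (P : Matrix m n ℝ) : 0 ≤ frobNorm P := sqrt_nonneg _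

lemma frobNorm_neg (P : Matrix m n ℝ) : frobNorm (-P) = frobNorm P := by
  simp [frobNorm]

lemma frobInner_self (P : Matrix m n ℝ) : frobInner P P = frobNorm P ^ 2 := by
  rw [frobNorm, sq_sqrt (by positivity)]
  simp only [frobInner, sq]

lemma frobInner_le_frobNorm_mul_frobNorm (P Q : Matrix m n ℝ) :
    frobInner P Q ≤ frobNorm P * frobNorm Q := by
  have h := Real.sum_mul_le_sqrt_mul_sqrt Finset.univ (fun ij : m × n => P ij.1 ij.2)
    (fun ij => Q ij.1 ij.2)
  simpa only [frobInner, frobNorm, ← Finset.univ_product_univ, Finset.sum_product] using h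

lemma frobInner_neg_right (P Q : Matrix m n ℝ) : frobInner P (-Q) = -frobInner P Q := by
  simp [frobInner]

lemma frobInner_sub_left (P Q R : Matrix m n ℝ) :
    frobInner (P - Q) R = frobInner P R - frobInner Q R := by
  simp [frobInner, sub_mul]

lemma frobInner_smul_right (r : ℝ) (P Q : Matrix m n ℝ) :
    frobInner P (r • Q) = r * frobInner P Q := by
  simp [frobInner, Finset.mul_sum, mul_left_comm]

lemma frobInner_mul_left (M : Matrix l m ℝ) (P : Matrix m n ℝ) (Q : Matrix l n ℝ) :
    frobInner (M * P) Q = frobInner P (Mᵀ * Q) := by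
  rw [frobInner_eq_trace, frobInner_eq_trace, transpose_mul, Matrix.mul_assoc]

lemma sum_dotProduct_mulVec_le {A : Matrix n n ℝ} {r : ℝ}
    (hA : ∀ x, x ⬝ᵥ A *ᵥ x ≤ r * (x ⬝ᵥ x)) (P : Matrix m n ℝ) :
    ∑ i, P i ⬝ᵥ A *ᵥ P i ≤ r * frobNorm P ^ 2 := by
  rw [← frobInner_self, frobInner, Finset.mul_sum]
  exact Finset.sum_le_sum fun i _ => hA (P i)

lemma frobInner_mul_self_le {A : Matrix m m ℝ} {r : ℝ}
    (hA : ∀ x, x ⬝ᵥ A *ᵥ x ≤ r * (x ⬝ᵥ x)) (P : Matrix m n ℝ) :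
    frobInner P (A * P) ≤ r * frobNorm P ^ 2 := by
  rw [← frobInner_self, frobInner_eq_trace, frobInner_eq_trace, trace, trace, Finset.mul_sum]
  exact Finset.sum_le_sum fun k _ => hA (Pᵀ k)

end Frobenius

lemma integral_mul_indicator_le_exp_neg_mul_integral {α : Type*} [MeasurableSpace α]
    {μ : Measure α} {f T : α → ℝ} {S : Set α} {t : ℝ} (hf : 0 ≤ f) (hT : ∀ x ∈ S, t ≤ T x)
    (hint : Integrable (fun x => f x * exp (T x)) μ) :
    ∫ x, f x * S.indicator (fun _ => 1) x ∂μ ≤ exp (-t) * ∫ x, f x * exp (T x) ∂μ := by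
  rw [← integral_const_mul]
  refine integral_mono_of_nonneg (.of_forall fun x => ?_) (hint.const_mul _)
    (.of_forall fun x => ?_)
  · exact mul_nonneg (hf x) (Set.indicator_nonneg (fun _ _ => zero_le_one) x)
  dsimp only
  by_cases hx : x ∈ S
  · rw [Set.indicator_of_mem hx, mul_one, mul_left_comm, ← exp_add]
    exact le_mul_of_one_le_right (hf x) (one_le_exp (by linarith [hT x hx]))
  · rw [Set.indicator_of_notMem hx, mul_zero]
    exact mul_nonneg (exp_nonneg _) (mul_nonneg (hf x) (exp_nonneg _))

section GaussianRows

variable {ι : Type*} [Fintype ι] {K : ℕ} {Ψ : Matrix (Fin K) (Fin K) ℝ}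

lemma prod_normalDensity_mul_exp_frobInner (A W : Matrix ι (Fin K) ℝ) (Y : ι → Fin K → ℝ) :
    (∏ i, normalDensity Ψ (A i) (Y i)) * exp (frobInner (of Y - A) W) =
      ∏ i, normalDensity Ψ (A i) (Y i) * exp ((Y i - A i) ⬝ᵥ W i) := by
  rw [Finset.prod_mul_distrib, frobInner, exp_sum]
  rfl

lemma integrable_prod_normalDensity_mul_exp_frobInner (hΨ : Ψ.PosDef)
    (A W : Matrix ι (Fin K) ℝ) :
    Integrable fun Y : ι → Fin K → ℝ =>
      (∏ i, normalDensity Ψ (A i) (Y i)) * exp (frobInner (of Y - A) W) := by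
  simp only [prod_normalDensity_mul_exp_frobInner]
  exact Integrable.fintype_prod_dep
    (f := fun i y => normalDensity Ψ (A i) y * exp ((y - A i) ⬝ᵥ W i))
    fun i => integrable_normalDensity_mul_exp_dotProduct hΨ _ _

lemma integral_prod_normalDensity_mul_exp_frobInner (hΨ : Ψ.PosDef)
    (A W : Matrix ι (Fin K) ℝ) :
    ∫ Y : ι → Fin K → ℝ, (∏ i, normalDensity Ψ (A i) (Y i)) * exp (frobInner (of Y - A) W) =
      exp (1 / 2 * ∑ i, W i ⬝ᵥ Ψ *ᵥ W i) := by
  simp only [prod_normalDensity_mul_exp_frobInner]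
  rw [integral_fintype_prod_volume_eq_prod
    (fun i y => normalDensity Ψ (A i) y * exp ((y - A i) ⬝ᵥ W i))]
  simp only [integral_normalDensity_mul_exp_dotProduct hΨ, Finset.mul_sum, exp_sum]

theorem integral_prod_normalDensity_mul_indicator_le (hΨ : Ψ.PosDef)
    (A a : Matrix ι (Fin K) ℝ) {S : Set (ι → Fin K → ℝ)} {t v : ℝ} (ht : 0 ≤ t) (hv : 0 < v)
    (hvar : ∑ i, a i ⬝ᵥ Ψ *ᵥ a i ≤ v) (hS : ∀ Y ∈ S, t ≤ frobInner (of Y - A) a) :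
    ∫ Y, (∏ i, normalDensity Ψ (A i) (Y i)) * S.indicator (fun _ => 1) Y ≤
      exp (-(t ^ 2 / (2 * v))) := by
  set s := t / v
  have hs : 0 ≤ s := div_nonneg ht hv.le
  have hvar_smul : ∑ i, (s • a) i ⬝ᵥ Ψ *ᵥ (s • a) i = s ^ 2 * ∑ i, a i ⬝ᵥ Ψ *ᵥ a i := by
    rw [Finset.mul_sum]
    refine Finset.sum_congr rfl fun i _ => ?_
    change (s • a i) ⬝ᵥ Ψ *ᵥ (s • a i) = _
    rw [mulVec_smul, smul_dotProduct, dotProduct_smul, smul_eq_mul, smul_eq_mul]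
    ring
  calc _ ≤ exp (-(s * t)) * exp (1 / 2 * ∑ i, (s • a) i ⬝ᵥ Ψ *ᵥ (s • a) i) := by
        rw [← integral_prod_normalDensity_mul_exp_frobInner hΨ A]
        refine integral_mul_indicator_le_exp_neg_mul_integral
          (fun Y => Finset.prod_nonneg fun i _ => normalDensity_nonneg hΨ.posSemidef _ _)
          (fun Y hY => ?_) (integrable_prod_normalDensity_mul_exp_frobInner hΨ A _)
        rw [frobInner_smul_right]
        exact mul_le_mul_of_nonneg_left (hS Y hY) hs
    _ ≤ exp (-(t ^ 2 / (2 * v))) := by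
        have hopt : -(s * t) + 1 / 2 * (s ^ 2 * v) = -(t ^ 2 / (2 * v)) := by
          simp only [s]
          field_simp
          ring
        rw [← exp_add, exp_le_exp, hvar_smul, ← hopt]
        gcongr

end GaussianRows

section LeastSquares

variable {R : Type*} [CommRing R] {m n k : Type*} [Fintype m] [Fintype n] [Fintype k]
  [DecidableEq n]

/-- `pseudoInverse X * Y` is the least-squares estimator `B̂ = (XᵀX)⁻¹XᵀY`. -/
noncomputable def pseudoInverse (X : Matrix m n R) : Matrix n m R := (Xᵀ * X)⁻¹ * Xᵀ

lemma pseudoInverse_mul_self {X : Matrix m n R} (h : IsUnit (Xᵀ * X).det) :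
    pseudoInverse X * X = 1 := by
  rw [pseudoInverse, Matrix.mul_assoc, nonsing_inv_mul _ h]

lemma pseudoInverse_mul_transpose {X : Matrix m n R} (h : IsUnit (Xᵀ * X).det) :
    pseudoInverse X * (pseudoInverse X)ᵀ = (Xᵀ * X)⁻¹ := by
  have hsymm : (Xᵀ * X)ᵀ = Xᵀ * X := by rw [transpose_mul, transpose_transpose]
  rw [pseudoInverse, transpose_mul, transpose_transpose, transpose_nonsing_inv, hsymm,
    Matrix.mul_assoc, ← Matrix.mul_assoc Xᵀ, mul_nonsing_inv _ h, Matrix.mul_one]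

lemma frobInner_sub_mul_transpose_pseudoInverse_mul {X : Matrix m n ℝ}
    (h : IsUnit (Xᵀ * X).det) (Y : Matrix m k ℝ) (B D : Matrix n k ℝ) :
    frobInner (Y - X * B) ((pseudoInverse X)ᵀ * D) = frobInner (pseudoInverse X * Y - B) D := by
  rw [← frobInner_mul_left, Matrix.mul_sub, ← Matrix.mul_assoc, pseudoInverse_mul_self h,
    Matrix.one_mul]

lemma frobNorm_transpose_pseudoInverse_mul_sq_le {X : Matrix m n ℝ} {c : ℝ} (hc : 0 < c)
    (hX : ∀ x, c * (x ⬝ᵥ x) ≤ x ⬝ᵥ (Xᵀ * X) *ᵥ x) (D : Matrix n k ℝ) :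
    frobNorm ((pseudoInverse X)ᵀ * D) ^ 2 ≤ c⁻¹ * frobNorm D ^ 2 := by
  rw [← frobInner_self, frobInner_mul_left, transpose_transpose, ← Matrix.mul_assoc,
    pseudoInverse_mul_transpose (isUnit_det_of_coercive hc hX)]
  exact frobInner_mul_self_le (dotProduct_inv_mulVec_le_of_coercive hc hX) D

end LeastSquares

theorem integral_prod_normalDensity_mul_indicator_leastSquares_le {m n : Type*} {K : ℕ}
    [Fintype m] [Fintype n] [DecidableEq n] {X : Matrix m n ℝ} {Ψ : Matrix (Fin K) (Fin K) ℝ}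
    (hΨ : Ψ.PosDef) {c d ε : ℝ} (hc : 0 < c) (hd : 0 < d) (hε : 0 ≤ ε)
    (hX : ∀ x, c * (x ⬝ᵥ x) ≤ x ⬝ᵥ (Xᵀ * X) *ᵥ x) (hΨd : ∀ x, x ⬝ᵥ Ψ *ᵥ x ≤ d * (x ⬝ᵥ x))
    {B B₀ : Matrix n (Fin K) ℝ} (hB : ε < frobNorm (B - B₀)) :
    ∫ Y : m → Fin K → ℝ, (∏ i, normalDensity Ψ ((X * B) i) (Y i)) *
        {Y' | frobNorm (pseudoInverse X * of Y' - B₀) ≤ ε / 2}.indicator (fun _ => 1) Y ≤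
      exp (-(c * ε ^ 2 / (8 * d))) := by
  set Δ := B - B₀
  have hΔ : 0 < frobNorm Δ := hε.trans_lt hB
  set M := pseudoInverse X
  refine (integral_prod_normalDensity_mul_indicator_le hΨ (X * B) (-(Mᵀ * Δ))
    (t := frobNorm Δ * ε / 2) (v := d * frobNorm Δ ^ 2 / c) (by positivity)
    (by positivity) ?_ ?_).trans_eq (congrArg exp ?_)
  · calc _ ≤ d * frobNorm (-(Mᵀ * Δ)) ^ 2 := sum_dotProduct_mulVec_le hΨd _
      _ ≤ d * (c⁻¹ * frobNorm Δ ^ 2) := by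
          rw [frobNorm_neg]
          gcongr
          exact frobNorm_transpose_pseudoInverse_mul_sq_le hc hX Δ
      _ = d * frobNorm Δ ^ 2 / c := by ring
  · intro Y (hY : frobNorm (M * of Y - B₀) ≤ ε / 2)
    rw [frobInner_neg_right,
      frobInner_sub_mul_transpose_pseudoInverse_mul (isUnit_det_of_coercive hc hX),
      ← sub_sub_sub_cancel_right _ _ B₀, frobInner_sub_left, frobInner_self]
    nlinarith [frobInner_le_frobNorm_mul_frobNorm (M * of Y - B₀) Δ,
      frobNorm_nonneg (M * of Y - B₀)]
  · field_simp
    ring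

theorem stmt_3_general {n p K : ℕ} (X : Matrix (Fin n) (Fin p) ℝ)
    (Ψ : Matrix (Fin K) (Fin K) ℝ) (hΨ : Ψ.PosDef)
    (B₀ : Matrix (Fin p) (Fin K) ℝ)
    (ε c d : ℝ) (hε : 0 < ε) (hc : 0 < c)
    (hH : (((n : ℝ)⁻¹) • (Xᵀ * X)).IsHermitian)
    (hmin : ∀ i, c < hH.eigenvalues i)
    (hd : IsGreatest (Set.range hΨ.1.eigenvalues) d) :
    ∀ B : Matrix (Fin p) (Fin K) ℝ, ε < frobNorm (B - B₀) →
      (∫ Y : Fin n → Fin K → ℝ,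
          (∏ i, normalDensity Ψ (fun k => (X * B) i k) (Y i)) *
            Set.indicator
              {Y' : Fin n → Fin K → ℝ |
                frobNorm ((Xᵀ * X)⁻¹ * Xᵀ * Matrix.of Y' - B₀) ≤ ε / 2}
              (fun _ => (1 : ℝ)) Y)
        ≤ Real.exp (-((n : ℝ) * ε ^ 2 * c / (16 * d))) := by
  intro B hB
  -- for `n = 0` all eigenvalues of `0⁻¹ • XᵀX = 0` vanish, so `p = 0` and `B - B₀` is empty
  have hn : 0 < (n : ℝ) := by
    refine (Nat.cast_nonneg n).lt_of_ne fun hn0 => ?_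
    have hzero := hH.eigenvalues_eq_zero_iff.2 (by rw [← hn0, _root_.inv_zero, zero_smul])
    have : IsEmpty (Fin p) := ⟨fun i => (hc.trans (hmin i)).ne' (congrFun hzero i)⟩
    simp [frobNorm] at hB
    linarith
  have hd0 : 0 < d := by
    obtain ⟨j, rfl⟩ := hd.1
    exact hΨ.eigenvalues_pos j
  have hG : ∀ x, n * c * (x ⬝ᵥ x) ≤ x ⬝ᵥ (Xᵀ * X) *ᵥ x := fun x => by
    have h := hH.le_dotProduct_mulVec (fun i => (hmin i).le) x
    rw [smul_mulVec, dotProduct_smul, smul_eq_mul, ← div_eq_inv_mul, le_div_iff₀ hn] at h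
    linarith
  refine (integral_prod_normalDensity_mul_indicator_leastSquares_le hΨ (by positivity) hd0 hε.le
    hG (hΨ.1.dotProduct_mulVec_le fun i => hd.2 ⟨i, rfl⟩) hB).trans (exp_le_exp.2 ?_)
  rw [neg_le_neg_iff, show (n : ℝ) * ε ^ 2 * c = n * c * ε ^ 2 by ring]
  exact div_le_div_of_nonneg_left (by positivity) (by positivity) (by linarith)

/-- Type II error bound for the test `Φ_n = I(‖B̂ - B₀‖ > ε/2)` in the multivariate
regression model `Y = XB + ε`, rows of `ε` iid `N_K(0, Ψ)`: if the smallest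
eigenvalue of `(1/n)XᵀX` exceeds `c > 0` and `d` is the largest eigenvalue of `Ψ`,
then `sup_{B : ‖B - B₀‖ > ε} E_B(1 - Φ_n) ≤ exp(-n ε² c / (16 d))`. -/
theorem stmt_3 {n p K : ℕ} (X : Matrix (Fin n) (Fin p) ℝ)
    (hrank : X.rank = p)
    (Ψ : Matrix (Fin K) (Fin K) ℝ) (hΨ : Ψ.PosDef)
    (B₀ : Matrix (Fin p) (Fin K) ℝ)
    (ε c d : ℝ) (hε : 0 < ε) (hc : 0 < c)
    (hH : (((n : ℝ)⁻¹) • (Xᵀ * X)).IsHermitian)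
    (hmin : ∀ i, c < hH.eigenvalues i)
    (hd : IsGreatest (Set.range hΨ.1.eigenvalues) d) :
    ∀ B : Matrix (Fin p) (Fin K) ℝ, ε < frobNorm (B - B₀) →
      (∫ Y : Fin n → Fin K → ℝ,
          (∏ i, normalDensity Ψ (fun k => (X * B) i k) (Y i)) *
            Set.indicator
              {Y' : Fin n → Fin K → ℝ |
                frobNorm ((Xᵀ * X)⁻¹ * Xᵀ * Matrix.of Y' - B₀) ≤ ε / 2}
              (fun _ => (1 : ℝ)) Y)
        ≤ Real.exp (-((n : ℝ) * ε ^ 2 * c / (16 * d))) :=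
  stmt_3_general X Ψ hΨ B₀ ε c d hε hc hH hmin hd
end

section
/- For every λ > 0, the integral identity ∫₀^∞ 2λ · g(λ²; 1/2, 1/ν) · g(ν; 1/2, 1) dν = 2 / ( π (1 + λ²) ) holds, where g(x; α, β) = (β^α / Γ(α)) x^{−α−1} e^{−β/x} for x > 0 is the inverse-gamma density. That is, if ν has the inverse-gamma IG(1/2, 1) distribution and, given ν, λ² has the inverse-gamma IG(1/2, 1/ν) distribution, then the marginal density of λ is the standard half-Cauchy density 2/(π(1+λ²)) on (0, ∞). -/
/-!
As a function of `ν`, the product `g(x; α, β/ν) g(ν; γ, δ)` is an unnormalised inverse-gamma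
density of shape `α + γ` and rate `β/x + δ`, so integrating out `ν` leaves
`β^α δ^γ Γ(α+γ) / (Γ(α) Γ(γ)) · x^{-α-1} (β/x + δ)^{-(α+γ)}`.
For `α = γ = 1/2`, `β = δ = 1` this is `x^{-1/2} / (π (1 + x))` since `Γ(1/2)² = π`,
and the Jacobian `2λ` at `x = λ²` turns it into the half-Cauchy density.
-/

open MeasureTheory Real

/-- The inverse-gamma density `g(x; α, β) = (β^α / Γ(α)) x^{-α-1} e^{-β/x}` for `x > 0`. -/
noncomputable def invGammaDensity (α β x : ℝ) : ℝ :=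
  β ^ α / Real.Gamma α * x ^ (-α - 1) * Real.exp (-β / x)

lemma integral_rpow_mul_exp_neg_div_Ioi {a b : ℝ} (ha : 0 < a) (hb : 0 < b) :
    ∫ x in Set.Ioi (0 : ℝ), x ^ (-a - 1) * exp (-b / x) = b ^ (-a) * Gamma a := by
  have hsubst := integral_comp_rpow_Ioi (fun y => y ^ (a - 1) * exp (-(b * y))) (p := -1)
    (by norm_num)
  rw [integral_rpow_mul_exp_neg_mul_Ioi ha hb, one_div, inv_rpow hb.le, ← rpow_neg hb.le]
    at hsubst
  rw [← hsubst]
  refine setIntegral_congr_fun measurableSet_Ioi fun x (hx : 0 < x) => ?_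
  rw [smul_eq_mul, rpow_neg_one, inv_rpow hx.le, ← rpow_neg hx.le, ← mul_assoc, abs_neg, abs_one,
    one_mul, ← rpow_add hx, div_eq_mul_inv, neg_mul]
  ring_nf

lemma integral_invGammaDensity_div_mul_invGammaDensity {α γ β δ x : ℝ} (hαγ : 0 < α + γ)
    (hβ : 0 ≤ β) (hδ : 0 < δ) (hx : 0 < x) :
    ∫ ν in Set.Ioi (0 : ℝ), invGammaDensity α (β / ν) x * invGammaDensity γ δ ν
      = β ^ α * δ ^ γ * Gamma (α + γ) / (Gamma α * Gamma γ) * x ^ (-α - 1)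
          * (β / x + δ) ^ (-(α + γ)) := by
  have hpos : 0 < β / x + δ := by positivity
  have hmix : ∀ ν ∈ Set.Ioi (0 : ℝ), invGammaDensity α (β / ν) x * invGammaDensity γ δ ν
      = β ^ α * δ ^ γ / (Gamma α * Gamma γ) * x ^ (-α - 1)
          * (ν ^ (-(α + γ) - 1) * exp (-(β / x + δ) / ν)) := by
    intro ν (hν : 0 < ν)
    have hpow : ν ^ (-(α + γ) - 1) = ν ^ (-γ - 1) / ν ^ α := by
      rw [← rpow_sub hν]
      ring_nf
    have hexp : exp (-(β / ν) / x) * exp (-δ / ν) = exp (-(β / x + δ) / ν) := by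
      rw [← exp_add]
      congr 1
      field_simp
      ring
    rw [hpow, ← hexp, invGammaDensity, invGammaDensity, div_rpow hβ hν.le]
    ring
  rw [setIntegral_congr_fun measurableSet_Ioi hmix, integral_const_mul,
    integral_rpow_mul_exp_neg_div_Ioi hαγ hpos]
  ring

/-- If `ν ~ IG(1/2, 1)` and `λ² | ν ~ IG(1/2, 1/ν)`, then the marginal density of
`λ` is the standard half-Cauchy density `2 / (π (1 + λ²))`. -/
theorem stmt_10 (l : ℝ) (hl : 0 < l) :
    ∫ ν in Set.Ioi (0 : ℝ),
        2 * l * invGammaDensity (1 / 2) (1 / ν) (l ^ 2) * invGammaDensity (1 / 2) 1 ν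
      = 2 / (π * (1 + l ^ 2)) := by
  simp_rw [mul_assoc (2 * l)]
  rw [integral_const_mul, integral_invGammaDensity_div_mul_invGammaDensity (by norm_num)
    zero_le_one one_pos (by positivity)]
  have hl3 : (l ^ 2) ^ (-(1 / 2 : ℝ) - 1) = (l ^ 3)⁻¹ := by
    rw [← rpow_natCast_mul hl.le, ← rpow_natCast, ← rpow_neg hl.le]
    norm_num
  rw [hl3, show (1 / 2 + 1 / 2 : ℝ) = 1 by norm_num, Gamma_one, Gamma_one_half_eq, rpow_neg_one,
    one_rpow, mul_self_sqrt pi_pos.le]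
  field_simp
end
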